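/- arXiv:1007.1643 — 7 statements merged into one kernel-verified Lean document; each statement's English description precedes it below -/
import Mathlib

section
/- Let L ⊆ ∏_{i=1}^t L_i be a subdirect product of finite lattices with projections π_i and smallest-preimage maps σ_i. Then every join-irreducible element of L lies in ⋃_{i=1}^t σ_i(J(L_i)), where J(L_i) is the set of join-irreducible elements of L_i; that is, J(L) ⊆ ⋃_i σ_i(J(L_i)). -/
/-!
Write `σᵢ` for the least-preimage maps. For every `p ∈ L` we have `p = ⋁ᵢ σᵢ(pᵢ)`, since each
`σᵢ(pᵢ) ≤ p` while the join agrees with `p` in every coordinate. If `p` is join-irreducible, it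
is therefore one of the `σᵢ(pᵢ)`. Each `σᵢ` is an injective join-homomorphism (a section of `πᵢ`),
and the least-preimage property makes minimality of `pᵢ` force minimality of `σᵢ(pᵢ)`; so `pᵢ` is
join-irreducible in `Lᵢ`.
-/

theorem SupIrred.exists_eq_of_finset_sup'_eq {ι α : Type*} [SemilatticeSup α] {a : α}
    {s : Finset ι} (hs : s.Nonempty) {f : ι → α} (ha : SupIrred a) (h : s.sup' hs f = a) :
    ∃ i ∈ s, f i = a := by
  induction hs using Finset.Nonempty.cons_induction with
  | singleton i => exact ⟨i, Finset.mem_singleton_self i, by simpa using h⟩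
  | cons i s _ hs ih =>
    rw [Finset.sup'_cons hs] at h
    rcases ha.2 h with h | h
    · exact ⟨i, Finset.mem_cons_self i s, h⟩
    · obtain ⟨j, hj, hj'⟩ := ih h
      exact ⟨j, Finset.mem_cons_of_mem hj, hj'⟩

namespace Sublattice

variable {ι : Type*} {β : ι → Type*} [∀ i, Lattice (β i)] {L : Sublattice (∀ i, β i)}

theorem nonempty_of_supIrred {p : L} (hp : SupIrred p) : Nonempty ι := by
  by_contra h
  exact hp.not_isMin fun x _ i => (h ⟨i⟩).elim

variable {σ : ∀ i, β i → L} (hσ : ∀ i (y : β i), IsLeast {x : L | x.val i = y} (σ i y))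
include hσ

theorem leastPreimage_apply_self (i : ι) (y : β i) : (σ i y).val i = y := (hσ i y).1

theorem leastPreimage_le_of_le {i : ι} {y : β i} {x : L} (h : y ≤ x.val i) : σ i y ≤ x := by
  have hmeet : (σ i y ⊓ x).val i = y := by
    simp only [coe_inf, Pi.inf_apply, leastPreimage_apply_self hσ, inf_eq_left.mpr h]
  exact ((hσ i y).2 hmeet).trans inf_le_right

theorem leastPreimage_sup (i : ι) (a b : β i) : σ i (a ⊔ b) = σ i a ⊔ σ i b := by
  apply le_antisymm
  · apply (hσ i (a ⊔ b)).2
    simp only [Set.mem_ofPred_eq, coe_sup, Pi.sup_apply, leastPreimage_apply_self hσ]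
  · have hval := leastPreimage_apply_self hσ i
    exact sup_le (leastPreimage_le_of_le hσ (by rw [hval]; exact le_sup_left))
      (leastPreimage_le_of_le hσ (by rw [hval]; exact le_sup_right))

theorem supIrred_of_supIrred_leastPreimage {i : ι} {q : β i} (hq : SupIrred (σ i q)) :
    SupIrred q := by
  have hval := leastPreimage_apply_self hσ i
  refine ⟨fun hmin => hq.not_isMin fun x hx => ?_, fun a b hab => ?_⟩
  · have hxi : x.val i ≤ q := by simpa only [hval] using hx i
    exact (hσ i q).2 (le_antisymm hxi (hmin hxi))
  · have hsup : σ i a ⊔ σ i b = σ i q := by rw [← leastPreimage_sup hσ, hab]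
    rcases hq.2 hsup with h | h
    · left; rw [← hval a, h, hval]
    · right; rw [← hval b, h, hval]

theorem finset_sup'_leastPreimage [Fintype ι] (hne : (Finset.univ : Finset ι).Nonempty) (p : L) :
    Finset.univ.sup' hne (fun i => σ i (p.val i)) = p := by
  apply le_antisymm
  · exact Finset.sup'_le _ _ fun i _ => (hσ i (p.val i)).2 rfl
  · intro j
    calc p.val j = (σ j (p.val j)).val j := (leastPreimage_apply_self hσ j _).symm
      _ ≤ _ := Finset.le_sup' (fun i => σ i (p.val i)) (Finset.mem_univ j) j

end Sublattice

theorem stmt_3_general {t : ℕ} {Lf : Fin t → Type*} [∀ i, Lattice (Lf i)]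
    (L : Sublattice (∀ i, Lf i))
    (σ : ∀ j, Lf j → L)
    (hσ : ∀ j (y : Lf j), IsLeast {x : L | x.val j = y} (σ j y)) :
    ∀ p : L, SupIrred p → ∃ i, ∃ q : Lf i, SupIrred q ∧ σ i q = p := by
  intro p hp
  have := Sublattice.nonempty_of_supIrred hp
  obtain ⟨i, -, hi⟩ := hp.exists_eq_of_finset_sup'_eq Finset.univ_nonempty
    (Sublattice.finset_sup'_leastPreimage hσ Finset.univ_nonempty p)
  exact ⟨i, p.val i, Sublattice.supIrred_of_supIrred_leastPreimage hσ (by rwa [hi]), hi⟩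

/-- In a subdirect product `L ⊆ ∏ᵢ Lᵢ` of finite lattices, every
join-irreducible element of `L` lies in `⋃ᵢ σᵢ(J(Lᵢ))`. -/
theorem stmt_3 {t : ℕ} {Lf : Fin t → Type*} [∀ i, Lattice (Lf i)] [∀ i, Finite (Lf i)]
    (L : Sublattice (∀ i, Lf i))
    (hsurj : ∀ i, Function.Surjective fun x : L => x.val i)
    (σ : ∀ j, Lf j → L)
    (hσ : ∀ j (y : Lf j), IsLeast {x : L | x.val j = y} (σ j y)) :
    ∀ p : L, SupIrred p → ∃ i, ∃ q : Lf i, SupIrred q ∧ σ i q = p :=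
  stmt_3_general L σ hσ
end

section
/- Let L ⊆ ∏_{i=1}^t L_i be a subdirect product of finite lattices. Then every element of L is a (possibly empty) join of elements from ⋃_{i=1}^t σ_i(J(L_i)), where σ_i is the smallest-preimage map of the i-th projection. -/
/-!
Each element `y` of a finite lattice is the join of the join-irreducibles `q ≤ y`.
The least-preimage maps `σᵢ` are monotone and satisfy `σᵢ (xᵢ) ≤ x` and `(σᵢ q)ᵢ = q`,
so every `σᵢ q` with `q ≤ xᵢ` join-irreducible lies below `x`. Hence an upper bound `u`
of all such `σᵢ q` satisfies `q ≤ uᵢ` for all of them, i.e. `xᵢ ≤ uᵢ` for every `i`,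
which is `x ≤ u`.
-/

theorem isLUB_supIrred_le {α : Type*} [SemilatticeSup α] [OrderBot α] [WellFoundedLT α]
    (a : α) : IsLUB {q | SupIrred q ∧ q ≤ a} a := by
  refine ⟨fun q hq => hq.2, fun u hu => ?_⟩
  obtain ⟨s, rfl, hs⟩ := exists_supIrred_decomposition a
  exact Finset.sup_le fun q hq => hu ⟨hs hq, Finset.le_sup (f := id) hq⟩

theorem monotone_of_isLeast_preimage {F α β : Type*} [SemilatticeInf α] [SemilatticeInf β]
    [FunLike F α β] [InfHomClass F α β] (f : F) {σ : β → α}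
    (hσ : ∀ y, IsLeast {x | f x = y} (σ y)) : Monotone σ := by
  intro y y' h
  have hinf : f (σ y ⊓ σ y') = y := by
    rw [map_inf, (hσ y).1, (hσ y').1, inf_eq_left.2 h]
  exact ((hσ y).2 hinf).trans inf_le_right

theorem Sublattice.isLUB_leastPreimage_supIrred {ι : Type*} {Lf : ι → Type*}
    [∀ i, Lattice (Lf i)] [∀ i, Finite (Lf i)] (L : Sublattice (∀ i, Lf i))
    (σ : ∀ j, Lf j → L) (hσ : ∀ j (y : Lf j), IsLeast {x : L | x.val j = y} (σ j y)) (x : L) :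
    IsLUB {a | (∃ i, ∃ q : Lf i, SupIrred q ∧ σ i q = a) ∧ a ≤ x} x := by
  refine ⟨fun a ha => ha.2, fun u hu j => ?_⟩
  have : Nonempty (Lf j) := ⟨x.val j⟩
  have : Fintype (Lf j) := Fintype.ofFinite _
  let : OrderBot (Lf j) := Fintype.toOrderBot (Lf j)
  have hσ_mono : Monotone (σ j) :=
    monotone_of_isLeast_preimage ((Pi.evalLatticeHom j).comp L.subtype) (hσ j)
  refine (isLUB_supIrred_le (x.val j)).2 fun q ⟨hq, hqx⟩ => ?_
  have hσq : σ j q ≤ x := (hσ_mono hqx).trans ((hσ j (x.val j)).2 rfl)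
  calc q = (σ j q).val j := (hσ j q).1.symm
    _ ≤ u.val j := hu ⟨⟨j, q, hq, rfl⟩, hσq⟩ j

theorem stmt_4_general {t : ℕ} {Lf : Fin t → Type*} [∀ i, Lattice (Lf i)] [∀ i, Finite (Lf i)]
    (L : Sublattice (∀ i, Lf i))
    (σ : ∀ j, Lf j → L)
    (hσ : ∀ j (y : Lf j), IsLeast {x : L | x.val j = y} (σ j y)) :
    ∀ x : L, ∃ A : Set L,
      (∀ a ∈ A, ∃ i, ∃ q : Lf i, SupIrred q ∧ σ i q = a) ∧ IsLUB A x :=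
  fun x => ⟨_, fun _ ha => ha.1, L.isLUB_leastPreimage_supIrred σ hσ x⟩

/-- In a subdirect product `L ⊆ ∏ᵢ Lᵢ` of finite lattices, every element
of `L` is a (possibly empty) join of elements of `⋃ᵢ σᵢ(J(Lᵢ))` (the empty join
being the bottom element of `L`, expressed via `IsLUB`). -/
theorem stmt_4 {t : ℕ} {Lf : Fin t → Type*} [∀ i, Lattice (Lf i)] [∀ i, Finite (Lf i)]
    (L : Sublattice (∀ i, Lf i))
    (hsurj : ∀ i, Function.Surjective fun x : L => x.val i)
    (σ : ∀ j, Lf j → L)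
    (hσ : ∀ j (y : Lf j), IsLeast {x : L | x.val j = y} (σ j y)) :
    ∀ x : L, ∃ A : Set L,
      (∀ a ∈ A, ∃ i, ∃ q : Lf i, SupIrred q ∧ σ i q = a) ∧ IsLUB A x :=
  stmt_4_general L σ hσ
end

section
/- Let L be a finite lattice that is a subdirect product of finite lattices L₁,…,L_t with smallest-preimage maps σ_i, and let G(L) denote the set of x ∈ L with x = σ_i(π_i(x)) for some i, i.e., x ∈ σ_i(L_i∖{0}) for some i. If x ∈ L, x ≠ 0, and all prime quotients x/y (y a lower cover of x) are mutually projective (x is sub-irreducible), then x ∈ G(L). -/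
/-- The quotient `q.1/q.2` transposes up to `r.1/r.2`: `q.1 ⊔ r.2 = r.1` and
`q.1 ⊓ r.2 = q.2`. -/
def TransposedUp {β : Type*} [Lattice β] (q r : β × β) : Prop :=
  q.1 ⊔ r.2 = r.1 ∧ q.1 ⊓ r.2 = q.2

/-- Two quotients are projective if they are connected by a finite chain of
transpositions (up or down). -/
def ProjectiveQuot {β : Type*} [Lattice β] (q r : β × β) : Prop :=
  Relation.ReflTransGen (fun a b => TransposedUp a b ∨ TransposedUp b a) q r

/-- Let `L` be a subdirect product of finite lattices with
smallest-preimage maps `σᵢ`. If `x ≠ 0` and all prime quotients `x/w` (`w ⋖ x`)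
are mutually projective (`x` is sub-irreducible), then `x` belongs to the
scaffolding `G(L) = ⋃ᵢ σᵢ(Lᵢ∖{0})`. -/
theorem stmt_7 {t : ℕ} {Lf : Fin t → Type*} [∀ i, Lattice (Lf i)] [∀ i, Finite (Lf i)]
    [∀ i, OrderBot (Lf i)]
    (L : Sublattice (∀ i, Lf i))
    (hsurj : ∀ i, Function.Surjective fun x : L => x.val i)
    (σ : ∀ j, Lf j → L)
    (hσ : ∀ j (y : Lf j), IsLeast {x : L | x.val j = y} (σ j y))
    (x : L) (hx : ¬ IsMin x)
    (hsub : ∀ w w' : L, w ⋖ x → w' ⋖ x → ProjectiveQuot (x, w) (x, w')) :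
    ∃ i, ∃ y : Lf i, y ≠ ⊥ ∧ σ i y = x := by
  have hfin : Finite L := Subtype.finite
  -- any element strictly below x lies below some lower cover of x
  have aux : ∀ s : L, s < x → ∃ w, s ≤ w ∧ w ⋖ x := by
    intro s hs
    obtain ⟨m, ⟨hsm, hmx⟩, hmax⟩ := Set.Finite.exists_maximalFor id
      {w : L | s ≤ w ∧ w < x} (Set.toFinite _) ⟨s, le_rfl, hs⟩
    refine ⟨m, hsm, hmx, fun z hmz hzx => ?_⟩
    exact absurd (hmax ⟨hsm.trans hmz.le, hzx⟩ hmz.le) hmz.not_ge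
  obtain ⟨w0, hw0⟩ := not_isMin_iff.mp hx
  obtain ⟨w, _, hwx⟩ := aux w0 hw0
  -- some coordinate separates x and w
  have hne : x.val ≠ w.val := fun h => hwx.lt.ne' (Subtype.coe_injective h)
  obtain ⟨j, hj⟩ := Function.ne_iff.mp hne
  -- equality at coordinate j is invariant under projectivity
  have step : ∀ q r : L × L, TransposedUp q r →
      ((q.1 : ∀ i, Lf i) j = (q.2 : ∀ i, Lf i) j ↔ (r.1 : ∀ i, Lf i) j = (r.2 : ∀ i, Lf i) j) := by
    rintro ⟨a, b⟩ ⟨c, d⟩ ⟨h1, h2⟩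
    simp only at h1 h2
    have hcd : (c : ∀ i, Lf i) j = (a : ∀ i, Lf i) j ⊔ (d : ∀ i, Lf i) j := by
      rw [← h1]; rfl
    have hab : (b : ∀ i, Lf i) j = (a : ∀ i, Lf i) j ⊓ (d : ∀ i, Lf i) j := by
      rw [← h2]; rfl
    constructor
    · intro h
      have h' : (a : ∀ i, Lf i) j = (b : ∀ i, Lf i) j := h
      have hbd : (b : L) ≤ d := h2 ▸ inf_le_right
      have hbd' : (b : ∀ i, Lf i) j ≤ (d : ∀ i, Lf i) j := hbd j
      show (c : ∀ i, Lf i) j = (d : ∀ i, Lf i) j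
      rw [hcd, h', sup_eq_right.mpr hbd']
    · intro h
      have h' : (c : ∀ i, Lf i) j = (d : ∀ i, Lf i) j := h
      have hac : (a : L) ≤ c := h1 ▸ le_sup_left
      have hle : (a : ∀ i, Lf i) j ≤ (d : ∀ i, Lf i) j := h' ▸ hac j
      show (a : ∀ i, Lf i) j = (b : ∀ i, Lf i) j
      rw [hab, inf_eq_left.mpr hle]
  have key : ∀ q r : L × L, ProjectiveQuot q r →
      ((q.1 : ∀ i, Lf i) j = (q.2 : ∀ i, Lf i) j ↔ (r.1 : ∀ i, Lf i) j = (r.2 : ∀ i, Lf i) j) := by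
    intro q r h
    induction h with
    | refl => exact Iff.rfl
    | tail _ h ih =>
      rcases h with h | h
      · exact ih.trans (step _ _ h)
      · exact ih.trans (step _ _ h).symm
  -- hence every lower cover of x differs from x at coordinate j
  have hall : ∀ w' : L, w' ⋖ x → x.val j ≠ w'.val j := by
    intro w' hw' h
    exact hj ((key (x, w) (x, w') (hsub w w' hwx hw')).mpr h)
  -- the least preimage of x.val j equals x
  have hs := hσ j (x.val j)
  have hsle : σ j (x.val j) ≤ x := hs.2 rfl
  have hsval : (σ j (x.val j)).val j = x.val j := hs.1
  have hsx : σ j (x.val j) = x := by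
    rcases eq_or_lt_of_le hsle with h | h
    · exact h
    · obtain ⟨w', hsw', hw'⟩ := aux _ h
      have h1 : x.val j ≤ w'.val j := by
        calc x.val j = (σ j (x.val j)).val j := hsval.symm
          _ ≤ w'.val j := hsw' j
      exact absurd (le_antisymm h1 (hw'.lt.le j)) (hall w' hw')
  refine ⟨j, x.val j, ?_, hsx⟩
  intro hbot
  refine hx fun b _ => ?_
  have hj2 : ((b ⊓ x : L) : ∀ i, Lf i) j = x.val j := by
    rw [hbot]
    exact bot_unique (hbot ▸ (inf_le_right : (b ⊓ x : L) ≤ x) j)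
  have := hs.2 (hj2 : (b ⊓ x : L) ∈ {z : L | z.val j = x.val j})
  exact (hsx ▸ this).trans inf_le_left
end

section
/- Let L be a finite modular lattice, expressed as a subdirect product of subdirectly irreducible (hence simple) modular lattices L₁,…,L_t with smallest-preimage maps σ_i. Then the scaffolding G(L) = ⋃_i σ_i(L_i ∖ {0}) equals the set of sub-irreducible elements of L, i.e., those nonzero x ∈ L all of whose prime quotients x/w (w ⋖ x) are mutually projective. -/
/-- A lattice congruence: an equivalence relation compatible with `⊔` and `⊓`. -/
def IsLatticeCon {β : Type*} [Lattice β] (r : β → β → Prop) : Prop :=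
  Equivalence r ∧ (∀ a b c d, r a b → r c d → r (a ⊔ c) (b ⊔ d)) ∧
    (∀ a b c d, r a b → r c d → r (a ⊓ c) (b ⊓ d))

/-- A simple lattice: nontrivial, and every lattice congruence is trivial or full. -/
def IsSimpleLattice (β : Type*) [Lattice β] : Prop :=
  Nontrivial β ∧ ∀ r : β → β → Prop, IsLatticeCon r →
    (∀ a b, r a b → a = b) ∨ (∀ a b, r a b)

/-! In a finite modular lattice the congruence generated by a prime quotient `a/b` collapses
exactly the pairs whose interval is a chain of covers projective to `a/b`; hence it is an atom
of the congruence lattice. The kernel of a projection `πᵢ : L → Lᵢ` onto a simple lattice is a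
maximal congruence. If two such atoms `α ≠ β` are not below `ker πᵢ`, then `α ∧ β = 0` and
`β ∨ ker πᵢ = 1`, and distributivity of congruence lattices forces `α ≤ ker πᵢ`, a contradiction;
so all prime quotients not collapsed by `πᵢ` are projective. Minimality of `x = σᵢ(y)` in its
fibre says that no lower cover of `x` is collapsed by `πᵢ`. Conversely, projective quotients are
collapsed by the same congruences, so if one lower cover of `x` is not collapsed by `πⱼ`, none
is, and then `x` is least in its `πⱼ`-fibre, that is `x = σⱼ(xⱼ)`. -/

open Relation

section Congruence

variable {M N : Type*} [Lattice M] [Lattice N] {φ : M → M → Prop} {a b c d : M}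

theorem isLatticeCon_of_equivalence (hφ : Equivalence φ)
    (hsup : ∀ {a b} e, φ a b → φ (a ⊔ e) (b ⊔ e))
    (hinf : ∀ {a b} e, φ a b → φ (a ⊓ e) (b ⊓ e)) : IsLatticeCon φ := by
  refine ⟨hφ, fun a b c d hab hcd => hφ.trans (hsup c hab) ?_,
    fun a b c d hab hcd => hφ.trans (hinf c hab) ?_⟩
  · simpa only [sup_comm b] using hsup b hcd
  · simpa only [inf_comm b] using hinf b hcd

theorem isLatticeCon_reflTransGen {r : M → M → Prop} (hsymm : ∀ {a b}, r a b → r b a)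
    (hsup : ∀ {a b} e, r a b → r (a ⊔ e) (b ⊔ e))
    (hinf : ∀ {a b} e, r a b → r (a ⊓ e) (b ⊓ e)) : IsLatticeCon (ReflTransGen r) := by
  refine isLatticeCon_of_equivalence ⟨fun _ => .refl, fun h => ?_, .trans⟩
    (fun e h => h.lift (· ⊔ e) fun _ _ => hsup e) (fun e h => h.lift (· ⊓ e) fun _ _ => hinf e)
  exact reflTransGen_swap.1 (ReflTransGen.mono (p := Function.swap r) (fun _ _ => hsymm) _ _ h)

theorem IsLatticeCon.inf {ψ : M → M → Prop} (hφ : IsLatticeCon φ) (hψ : IsLatticeCon ψ) :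
    IsLatticeCon (fun a b => φ a b ∧ ψ a b) :=
  ⟨⟨fun a => ⟨hφ.1.refl a, hψ.1.refl a⟩, fun h => ⟨hφ.1.symm h.1, hψ.1.symm h.2⟩,
      fun h h' => ⟨hφ.1.trans h.1 h'.1, hψ.1.trans h.2 h'.2⟩⟩,
    fun _ _ _ _ h h' => ⟨hφ.2.1 _ _ _ _ h.1 h'.1, hψ.2.1 _ _ _ _ h.2 h'.2⟩,
    fun _ _ _ _ h h' => ⟨hφ.2.2 _ _ _ _ h.1 h'.1, hψ.2.2 _ _ _ _ h.2 h'.2⟩⟩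

theorem LatticeHom.isLatticeCon_ker (π : LatticeHom M N) :
    IsLatticeCon (fun a b => π a = π b) :=
  isLatticeCon_of_equivalence ⟨fun _ => rfl, Eq.symm, Eq.trans⟩
    (fun e h => by simp only [map_sup, h]) (fun e h => by simp only [map_inf, h])

theorem IsLatticeCon.sup_right (hφ : IsLatticeCon φ) (h : φ a b) (e : M) :
    φ (a ⊔ e) (b ⊔ e) :=
  hφ.2.1 _ _ _ _ h (hφ.1.refl e)

theorem IsLatticeCon.inf_right (hφ : IsLatticeCon φ) (h : φ a b) (e : M) :
    φ (a ⊓ e) (b ⊓ e) :=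
  hφ.2.2 _ _ _ _ h (hφ.1.refl e)

theorem IsLatticeCon.of_reflTransGen (hφ : IsLatticeCon φ) (h : ReflTransGen φ a b) :
    φ a b := by
  induction h with
  | refl => exact hφ.1.refl a
  | tail _ hbc ih => exact hφ.1.trans ih hbc

theorem IsLatticeCon.inf_sup (hφ : IsLatticeCon φ) (h : φ a b) : φ (a ⊓ b) (a ⊔ b) := by
  have hinf : φ (a ⊓ b) b := by simpa only [inf_idem] using hφ.inf_right h b
  have hsup : φ (a ⊔ b) b := by simpa only [sup_idem] using hφ.sup_right h b
  exact hφ.1.trans hinf (hφ.1.symm hsup)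

theorem IsLatticeCon.of_mem_Icc (hφ : IsLatticeCon φ) (h : φ a b) (hc : c ∈ Set.Icc a b)
    (hd : d ∈ Set.Icc a b) : φ c d := by
  have key : ∀ e ∈ Set.Icc a b, φ e b := fun e he => by
    simpa only [sup_eq_right.2 he.1, sup_eq_left.2 he.2] using hφ.sup_right h e
  exact hφ.1.trans (key c hc) (hφ.1.symm (key d hd))

theorem IsLatticeCon.transposedUp_iff (hφ : IsLatticeCon φ) {q r : M × M}
    (h : TransposedUp q r) : φ q.1 q.2 ↔ φ r.1 r.2 := by
  obtain ⟨hsup, hinf⟩ := h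
  constructor
  · intro hq
    have := hφ.sup_right hq r.2
    rwa [hsup, sup_eq_right.2 (hinf ▸ inf_le_right)] at this
  · intro hr
    have := hφ.1.symm (hφ.inf_right (hφ.1.symm hr) q.1)
    rwa [inf_comm, inf_eq_left.2 (hsup ▸ le_sup_left), inf_comm, hinf] at this

theorem IsLatticeCon.projectiveQuot_iff (hφ : IsLatticeCon φ) {q r : M × M}
    (h : ProjectiveQuot q r) : φ q.1 q.2 ↔ φ r.1 r.2 := by
  induction h with
  | refl => rfl
  | tail _ hstep ih =>
    rcases hstep with h | h
    · exact ih.trans (hφ.transposedUp_iff h)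
    · exact ih.trans (hφ.transposedUp_iff h).symm

/-- Distributivity of the congruence lattice, in the form `α ⊓ β = ⊥ → α ⊓ (γ ⊔ β) ≤ γ`. -/
theorem IsLatticeCon.rel_of_reflTransGen_of_disjoint {α β γ : M → M → Prop}
    (hα : IsLatticeCon α) (hβ : IsLatticeCon β) (hγ : IsLatticeCon γ)
    (hαβ : ∀ a b, α a b → β a b → a = b) (hab : α a b)
    (h : ReflTransGen (fun c d => γ c d ∨ β c d) a b) : γ a b := by
  set f : M → M := fun z => (z ⊔ a ⊓ b) ⊓ (a ⊔ b) with hf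
  have hf_mem : ∀ z, f z ∈ Set.Icc (a ⊓ b) (a ⊔ b) := fun z =>
    ⟨le_inf le_sup_right inf_le_sup, inf_le_right⟩
  have step : ∀ c d, γ c d ∨ β c d → γ (f c) (f d) := by
    rintro c d (hcd | hcd)
    · exact hγ.inf_right (hγ.sup_right hcd _) _
    · have hβf : β (f c) (f d) := hβ.inf_right (hβ.sup_right hcd _) _
      rw [hαβ _ _ (hα.of_mem_Icc (hα.inf_sup hab) (hf_mem c) (hf_mem d)) hβf]
      exact hγ.1.refl _
  simpa [hf] using hγ.of_reflTransGen (h.lift f step)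

/-- The kernel of a surjection onto a simple lattice is a maximal congruence: joined with any
congruence not below it, it relates everything. -/
theorem IsSimpleLattice.ker_or_reflTransGen (hN : IsSimpleLattice N) (π : LatticeHom M N)
    (hπ : Function.Surjective π) (hφ : IsLatticeCon φ) :
    (∀ a b, φ a b → π a = π b) ∨
      ∀ a b, ReflTransGen (fun c d => π c = π d ∨ φ c d) a b := by
  set ψ : N → N → Prop := fun u v => ∃ c d, φ c d ∧ π c = u ∧ π d = v
  have hψ : IsLatticeCon (ReflTransGen ψ) := by
    refine isLatticeCon_reflTransGen ?_ ?_ ?_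
    · rintro _ _ ⟨c, d, h, rfl, rfl⟩
      exact ⟨d, c, hφ.1.symm h, rfl, rfl⟩
    · rintro _ _ e ⟨c, d, h, rfl, rfl⟩
      obtain ⟨e, rfl⟩ := hπ e
      exact ⟨c ⊔ e, d ⊔ e, hφ.sup_right h e, map_sup π c e, map_sup π d e⟩
    · rintro _ _ e ⟨c, d, h, rfl, rfl⟩
      obtain ⟨e, rfl⟩ := hπ e
      exact ⟨c ⊓ e, d ⊓ e, hφ.inf_right h e, map_inf π c e, map_inf π d e⟩
  have lift : ∀ {u v}, ReflTransGen ψ u v → ∀ a b, π a = u → π b = v →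
      ReflTransGen (fun c d => π c = π d ∨ φ c d) a b := by
    intro u v h
    induction h with
    | refl => exact fun a b ha hb => .single (.inl (ha.trans hb.symm))
    | tail _ hstep ih =>
      obtain ⟨c, d, hcd, rfl, rfl⟩ := hstep
      exact fun a b ha hb => ((ih a c ha rfl).tail (.inr hcd)).tail (.inl hb.symm)
  refine (hN.2 _ hψ).imp (fun h a b hab => h _ _ (.single ⟨a, b, hab, rfl, rfl⟩)) ?_
  exact fun h a b => lift (h (π a) (π b)) a b rfl rfl

end Congruence

section Modular

variable {M : Type*} [Lattice M] {a b c d : M}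

theorem CovBy.sup_eq_or_transposedUp (hab : a ⋖ b) (d : M) :
    a ⊔ d = b ⊔ d ∨ TransposedUp (b, a) (b ⊔ d, a ⊔ d) := by
  by_cases h : b ≤ a ⊔ d
  · exact .inl (le_antisymm (sup_le_sup_right hab.le d) (sup_le h le_sup_right))
  · refine .inr ⟨by rw [← sup_assoc, sup_eq_left.2 hab.le], ?_⟩
    refine (hab.eq_or_eq (le_inf hab.le le_sup_left) inf_le_left).resolve_right fun he => h ?_
    exact he ▸ inf_le_right

theorem CovBy.inf_eq_or_transposedUp (hab : a ⋖ b) (d : M) :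
    a ⊓ d = b ⊓ d ∨ TransposedUp (b ⊓ d, a ⊓ d) (b, a) := by
  by_cases h : b ⊓ d ≤ a
  · exact .inl (le_antisymm (inf_le_inf_right d hab.le) (le_inf h inf_le_right))
  · refine .inr ⟨?_, by rw [inf_right_comm, inf_eq_right.2 hab.le]⟩
    refine (hab.eq_or_eq le_sup_right (sup_le inf_le_left hab.le)).resolve_left fun he => h ?_
    exact he ▸ le_sup_left

theorem TransposedUp.covBy_iff [IsModularLattice M] (h : TransposedUp (b, a) (c, d)) :
    a ⋖ b ↔ d ⋖ c := by
  obtain ⟨hsup, hinf⟩ := h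
  dsimp only at hsup hinf
  rw [← hsup, ← hinf]
  refine ⟨covBy_sup_of_inf_covBy_left, fun h => ?_⟩
  rw [sup_comm] at h
  exact inf_comm d b ▸ inf_covBy_of_covBy_sup_left h

def ProjChain (q : M × M) : M → M → Prop :=
  ReflTransGen fun a b => a ⋖ b ∧ ProjectiveQuot (b, a) q

variable {q : M × M}

theorem ProjChain.le (h : ProjChain q a b) : a ≤ b := by
  induction h with
  | refl => exact le_rfl
  | tail _ hstep ih => exact ih.trans hstep.1.le

theorem ProjChain.projectiveQuot_of_covBy (h : ProjChain q a b) (hab : a ⋖ b) :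
    ProjectiveQuot (b, a) q := by
  obtain rfl | ⟨c, hac, hcb⟩ := h.cases_head
  · exact absurd rfl hab.ne
  · obtain rfl := (hab.eq_or_eq hac.1.le (ProjChain.le hcb)).resolve_left hac.1.ne'
    exact hac.2

/-- The congruence generated by a prime quotient `q`. -/
def PrimeCon (q : M × M) (a b : M) : Prop := ProjChain q (a ⊓ b) (a ⊔ b)

theorem PrimeCon.of_covBy (hba : b ⋖ a) : PrimeCon (a, b) a b := by
  have h : ProjChain (a, b) b a := .single ⟨hba, .refl⟩
  simpa only [PrimeCon, inf_eq_right.2 hba.le, sup_eq_left.2 hba.le] using h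

theorem PrimeCon.projectiveQuot_of_covBy (h : PrimeCon q a b) (hab : a ⋖ b) :
    ProjectiveQuot (b, a) q := by
  rw [PrimeCon, inf_eq_left.2 hab.le, sup_eq_right.2 hab.le] at h
  exact h.projectiveQuot_of_covBy hab

/-- `PrimeCon (c, d)` is an atom of the congruence lattice. -/
theorem IsLatticeCon.rel_of_le_primeCon [Finite M] {φ : M → M → Prop} {s t : M}
    (hφ : IsLatticeCon φ) (hle : ∀ a b, φ a b → PrimeCon (c, d) a b) (hst : φ s t)
    (hne : s ≠ t) : φ c d := by
  have hlt : s ⊓ t < s ⊔ t := inf_le_sup.lt_of_ne fun h => hne (inf_eq_sup.1 h)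
  obtain ⟨m, hm, hmle⟩ := exists_covBy_le_of_lt hlt
  have hφm : φ (s ⊓ t) m :=
    hφ.of_mem_Icc (hφ.inf_sup hst) ⟨le_rfl, inf_le_sup⟩ ⟨hm.le, hmle⟩
  exact (hφ.projectiveQuot_iff ((hle _ _ hφm).projectiveQuot_of_covBy hm)).1 (hφ.1.symm hφm)

variable [IsModularLattice M]

theorem ProjChain.sup (h : ProjChain q a b) (e : M) : ProjChain q (a ⊔ e) (b ⊔ e) := by
  induction h with
  | refl => exact .refl
  | tail _ hstep ih =>
    rcases hstep.1.sup_eq_or_transposedUp e with heq | htr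
    · rwa [heq] at ih
    · exact ih.tail ⟨htr.covBy_iff.1 hstep.1, .head (.inr htr) hstep.2⟩

theorem ProjChain.inf (h : ProjChain q a b) (e : M) : ProjChain q (a ⊓ e) (b ⊓ e) := by
  induction h with
  | refl => exact .refl
  | tail _ hstep ih =>
    rcases hstep.1.inf_eq_or_transposedUp e with heq | htr
    · rwa [heq] at ih
    · exact ih.tail ⟨htr.covBy_iff.2 hstep.1, .head (.inl htr) hstep.2⟩

theorem ProjChain.of_le_of_le {a' b' : M} (h : ProjChain q a b) (ha : a ≤ a') (hab : a' ≤ b')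
    (hb : b' ≤ b) : ProjChain q a' b' := by
  simpa only [sup_eq_right.2 ha, sup_eq_left.2 (hab.trans hb), inf_eq_left.2 hab,
    inf_eq_right.2 hb] using (h.sup a').inf b'

theorem PrimeCon.trans (hab : PrimeCon q a b) (hbc : PrimeCon q b c) : PrimeCon q a c := by
  have lower : ProjChain q (a ⊓ b ⊓ c) (a ⊓ b) :=
    ProjChain.of_le_of_le (hbc.inf (a ⊓ b)) (by simp [inf_le_of_right_le, inf_le_of_left_le])
      (by simp [inf_le_of_left_le]) (by simp [le_sup_of_le_left])
  have upper : ProjChain q (a ⊔ b) (a ⊔ b ⊔ c) :=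
    ProjChain.of_le_of_le (hbc.sup (a ⊔ b)) (by simp [le_sup_of_le_right]) (by simp)
      (by simp [le_sup_of_le_left])
  exact ProjChain.of_le_of_le (ReflTransGen.trans (ReflTransGen.trans lower hab) upper)
    (by simp [inf_le_of_left_le]) inf_le_sup (by simp [le_sup_of_le_left])

theorem PrimeCon.isLatticeCon (q : M × M) : IsLatticeCon (PrimeCon q) := by
  refine isLatticeCon_of_equivalence ⟨fun a => ?_, fun h => ?_, PrimeCon.trans⟩
    (fun e h => ?_) (fun e h => ?_)
  · have h : ProjChain q a a := .refl
    simpa only [PrimeCon, inf_idem, sup_idem] using h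
  · rwa [PrimeCon, inf_comm, sup_comm]
  · exact (h.sup e).of_le_of_le (by simp [le_sup_of_le_left]) inf_le_sup
      (by simp [le_sup_of_le_left])
  · exact (h.inf e).of_le_of_le (by simp [inf_le_of_left_le]) inf_le_sup
      (by simp [inf_le_of_left_le, le_sup_of_le_left])

theorem projectiveQuot_of_map_ne [Finite M] {N : Type*} [Lattice N] (hN : IsSimpleLattice N)
    (π : LatticeHom M N) (hπ : Function.Surjective π) (hba : b ⋖ a) (hdc : d ⋖ c)
    (hab : π b ≠ π a) (hcd : π d ≠ π c) : ProjectiveQuot (a, b) (c, d) := by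
  suffices h : PrimeCon (c, d) b a from h.projectiveQuot_of_covBy hba
  by_contra hne
  have hdisj : ∀ s t, PrimeCon (a, b) s t → PrimeCon (c, d) s t → s = t := by
    refine fun s t hs ht => by_contra fun hst => hne ?_
    have := ((PrimeCon.isLatticeCon _).inf (PrimeCon.isLatticeCon _)).rel_of_le_primeCon
      (fun _ _ h => h.1) ⟨hs, ht⟩ hst
    exact (PrimeCon.isLatticeCon _).1.symm this.2
  rcases hN.ker_or_reflTransGen π hπ (PrimeCon.isLatticeCon (c, d)) with hker | hjoin
  · exact hcd (hker _ _ (PrimeCon.of_covBy hdc)).symm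
  · exact hab ((PrimeCon.isLatticeCon _).rel_of_reflTransGen_of_disjoint
      (PrimeCon.isLatticeCon _) π.isLatticeCon_ker hdisj (PrimeCon.of_covBy hba) (hjoin a b)).symm

end Modular

section Fibre

variable {M N : Type*} [Lattice M] [Lattice N] (π : LatticeHom M N) {x : M}

theorem isLeast_fibre_of_projectiveQuot [Finite M] {w : M} (hw : w ⋖ x) (hπw : π w ≠ π x)
    (hproj : ∀ w w' : M, w ⋖ x → w' ⋖ x → ProjectiveQuot (x, w) (x, w')) :
    IsLeast {z | π z = π x} x := by
  refine ⟨rfl, fun z hz => by_contra fun hxz => ?_⟩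
  have hlt : x ⊓ z < x := inf_le_left.lt_of_ne fun h => hxz (h ▸ inf_le_right)
  obtain ⟨w', hle, hw'⟩ := exists_le_covBy_of_lt hlt
  have hπw' : π x = π w' := by
    refine le_antisymm ?_ (OrderHomClass.mono π hw'.le)
    calc π x = π (x ⊓ z) := by rw [map_inf, hz.out, inf_idem]
      _ ≤ π w' := OrderHomClass.mono π hle
  exact hπw ((π.isLatticeCon_ker.projectiveQuot_iff (hproj w w' hw hw')).2 hπw').symm

theorem isMin_iff_map_eq_bot [OrderBot N] (hπ : Function.Surjective π)
    (hx : IsLeast {z | π z = π x} x) : IsMin x ↔ π x = ⊥ := by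
  constructor
  · intro hmin
    obtain ⟨z, hz⟩ := hπ ⊥
    have := OrderHomClass.mono π (hmin (inf_le_left : x ⊓ z ≤ x))
    rwa [map_inf, hz, inf_bot_eq, le_bot_iff] at this
  · intro hbot z hz
    exact hx.2 ((le_bot_iff.1 (hbot ▸ OrderHomClass.mono π hz)).trans hbot.symm)

end Fibre

theorem stmt_8_general {t : ℕ} {Lf : Fin t → Type*} [∀ i, Lattice (Lf i)] [∀ i, Finite (Lf i)]
    [∀ i, OrderBot (Lf i)]
    (hsimple : ∀ i, IsSimpleLattice (Lf i))
    (L : Sublattice (∀ i, Lf i)) [IsModularLattice L]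
    (hsurj : ∀ i, Function.Surjective fun x : L => x.val i)
    (σ : ∀ j, Lf j → L)
    (hσ : ∀ j (y : Lf j), IsLeast {x : L | x.val j = y} (σ j y))
    (G : Set L) (hG : G = ⋃ i, σ i '' {y : Lf i | y ≠ ⊥}) :
    G = {x : L | ¬ IsMin x ∧
          ∀ w w' : L, w ⋖ x → w' ⋖ x → ProjectiveQuot (x, w) (x, w')} := by
  have hfin : Finite L := Finite.of_injective _ Subtype.val_injective
  let π i : LatticeHom L (Lf i) := (Pi.evalLatticeHom i).comp L.subtype
  subst hG
  ext x
  simp only [Set.mem_iUnion, Set.mem_image]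
  constructor
  · rintro ⟨i, y, hy, rfl⟩
    have hleast : IsLeast {z | π i z = π i (σ i y)} (σ i y) := by
      rw [show π i (σ i y) = y from (hσ i y).1]
      exact hσ i y
    have hcov : ∀ w, w ⋖ σ i y → π i w ≠ π i (σ i y) := fun w hw h =>
      hw.lt.not_ge (hleast.2 h)
    refine ⟨fun hmin => hy ?_, fun w w' hw hw' =>
      projectiveQuot_of_map_ne (hsimple i) (π i) (hsurj i) hw hw' (hcov w hw) (hcov w' hw')⟩
    exact (hσ i y).1.symm.trans ((isMin_iff_map_eq_bot (π i) (hsurj i) hleast).1 hmin)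
  · rintro ⟨hmin, hproj⟩
    obtain ⟨z, hz⟩ := not_isMin_iff.1 hmin
    obtain ⟨w, -, hw⟩ := exists_le_covBy_of_lt hz
    obtain ⟨j, hj⟩ : ∃ j, π j w ≠ π j x := by
      by_contra! h
      exact hw.ne (Subtype.ext (funext h))
    have hleast := isLeast_fibre_of_projectiveQuot (π j) hw hj hproj
    exact ⟨j, x.val j, fun hbot => hmin ((isMin_iff_map_eq_bot (π j) (hsurj j) hleast).2 hbot),
      (hσ j _).unique hleast⟩

/-- For a finite modular lattice `L`, subdirect product of subdirectly
irreducible (hence simple) modular lattices `Lᵢ` with smallest-preimage maps `σᵢ`,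
the scaffolding `G(L) = ⋃ᵢ σᵢ(Lᵢ∖{0})` equals the set of sub-irreducible elements
of `L` (nonzero elements all of whose prime quotients are mutually projective). -/
theorem stmt_8 {t : ℕ} {Lf : Fin t → Type*} [∀ i, Lattice (Lf i)] [∀ i, Finite (Lf i)]
    [∀ i, OrderBot (Lf i)] [∀ i, IsModularLattice (Lf i)]
    (hsimple : ∀ i, IsSimpleLattice (Lf i))
    (L : Sublattice (∀ i, Lf i)) [IsModularLattice L]
    (hsurj : ∀ i, Function.Surjective fun x : L => x.val i)
    (σ : ∀ j, Lf j → L)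
    (hσ : ∀ j (y : Lf j), IsLeast {x : L | x.val j = y} (σ j y))
    (G : Set L) (hG : G = ⋃ i, σ i '' {y : Lf i | y ≠ ⊥}) :
    G = {x : L | ¬ IsMin x ∧
          ∀ w w' : L, w ⋖ x → w' ⋖ x → ProjectiveQuot (x, w) (x, w')} :=
  stmt_8_general hsimple L hsurj σ hσ G hG
end

section
/- Let φ : L → L₀ be an epimorphism of finite modular lattices with smallest-preimage map σ, and let v ∈ L satisfy v = σ(φ(v)), v ≠ 0. Let v/w be a prime quotient of L and let r/s be a prime quotient in L₀ projective to φ(v)/φ(w). Set r̲ = σ(r) and s̲ = ⋁{u ∈ L : u ≤ r̲, φ(u) ≤ s}. Then r̲/s̲ is a prime quotient of L projective to v/w. -/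
section Transposition

variable {β : Type*} [Lattice β]

theorem TransposedUp.covBy_iff_s9 [IsUpperModularLattice β] [IsLowerModularLattice β]
    {q r : β × β} (h : TransposedUp q r) : q.2 ⋖ q.1 ↔ r.2 ⋖ r.1 := by
  obtain ⟨hsup, hinf⟩ := h
  rw [← hsup, ← hinf]
  exact ⟨covBy_sup_of_inf_covBy_left, inf_covBy_of_covBy_sup_right⟩

theorem ProjectiveQuot.covBy [IsUpperModularLattice β] [IsLowerModularLattice β]
    {q r : β × β} (h : ProjectiveQuot q r) (hq : q.2 ⋖ q.1) : r.2 ⋖ r.1 := by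
  induction h with
  | refl => exact hq
  | tail _ hstep ih =>
    rcases hstep with h | h
    · exact h.covBy_iff_s9.1 ih
    · exact h.covBy_iff_s9.2 ih

end Transposition

section Lift

variable {L L₀ : Type*} [Lattice L] [Lattice L₀] {φ : LatticeHom L L₀} {σ : L₀ → L}
  {p q : L₀} {b c : L}

/-- For a prime quotient `r/s`, the greatest element of `liftSet φ σ r s` is the paper's `s̲`. -/
def liftSet (φ : LatticeHom L L₀) (σ : L₀ → L) (p q : L₀) : Set L :=
  {u | u ≤ σ p ∧ φ u ≤ q}

theorem monotone_of_isLeast_preimage_s9 (hσ : ∀ y, IsLeast {x | φ x = y} (σ y)) : Monotone σ := by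
  intro p q hpq
  have hinf : φ (σ p ⊓ σ q) = p := by rw [map_inf, (hσ p).1, (hσ q).1, inf_eq_left.2 hpq]
  exact ((hσ p).2 hinf).trans inf_le_right

theorem supClosed_liftSet : SupClosed (liftSet φ σ p q) :=
  fun _ hu _ hu' => ⟨sup_le hu.1 hu'.1, (map_sup φ _ _).trans_le (sup_le hu.2 hu'.2)⟩

theorem sigma_mem_liftSet (hσ : ∀ y, IsLeast {x | φ x = y} (σ y)) (hqp : q ≤ p) :
    σ q ∈ liftSet φ σ p q :=
  ⟨monotone_of_isLeast_preimage_s9 hσ hqp, (hσ q).1.le⟩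

theorem exists_isGreatest_liftSet [Finite L] (hσ : ∀ y, IsLeast {x | φ x = y} (σ y))
    (hqp : q ≤ p) : ∃ b, IsGreatest (liftSet φ σ p q) b := by
  obtain ⟨m, hm⟩ := (liftSet φ σ p q).toFinite.exists_maximal ⟨_, sigma_mem_liftSet hσ hqp⟩
  exact ⟨m, hm.prop, fun u hu => le_sup_left.trans (hm.2 (supClosed_liftSet hu hm.prop) le_sup_right)⟩

theorem map_eq_of_isGreatest_liftSet (hσ : ∀ y, IsLeast {x | φ x = y} (σ y)) (hqp : q ≤ p)
    (hb : IsGreatest (liftSet φ σ p q) b) : φ b = q :=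
  le_antisymm hb.1.2 ((hσ q).1 ▸ OrderHomClass.mono φ (hb.2 (sigma_mem_liftSet hσ hqp)))

theorem covBy_of_isGreatest_liftSet (hσ : ∀ y, IsLeast {x | φ x = y} (σ y)) (hqp : q ⋖ p)
    (hb : IsGreatest (liftSet φ σ p q) b) : b ⋖ σ p := by
  have hφb := map_eq_of_isGreatest_liftSet hσ hqp.le hb
  refine ⟨hb.1.1.lt_of_ne fun h => hqp.ne (by rw [← hφb, h, (hσ p).1]), fun c hbc hcp => ?_⟩
  have hq : q ≤ φ c := hφb ▸ OrderHomClass.mono φ hbc.le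
  have hp : φ c ≤ p := (hσ p).1 ▸ OrderHomClass.mono φ hcp.le
  rcases hqp.eq_or_eq hq hp with h | h
  · exact hbc.not_ge (hb.2 ⟨hcp.le, h.le⟩)
  · exact hcp.not_ge ((hσ p).2 h)

theorem isGreatest_liftSet_of_covBy (hσ : ∀ y, IsLeast {x | φ x = y} (σ y)) (hpq : ¬p ≤ q)
    (hc : c ⋖ σ p) (hcq : φ c ≤ q) : IsGreatest (liftSet φ σ p q) c := by
  refine ⟨⟨hc.le, hcq⟩, fun u hu => ?_⟩
  rcases hc.eq_or_eq le_sup_right (sup_le hu.1 hc.le) with h | h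
  · exact h ▸ le_sup_left
  · refine absurd ?_ hpq
    rw [← (hσ p).1, ← h, map_sup]
    exact sup_le hu.2 hcq

theorem transposedUp_lift [IsLowerModularLattice L] (hσ : ∀ y, IsLeast {x | φ x = y} (σ y))
    {p' q' : L₀} {b' : L} (hqp : q ⋖ p) (hqp' : q' ⋖ p') (ht : TransposedUp (p, q) (p', q'))
    (hb : IsGreatest (liftSet φ σ p q) b) (hb' : IsGreatest (liftSet φ σ p' q') b') :
    TransposedUp (σ p, b) (σ p', b') := by
  obtain ⟨hsup, hinf⟩ : p ⊔ q' = p' ∧ p ⊓ q' = q := ht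
  have hb'cov := covBy_of_isGreatest_liftSet hσ hqp' hb'
  have hφb' := map_eq_of_isGreatest_liftSet hσ hqp'.le hb'
  have hσp : ¬σ p ≤ b' := fun h =>
    hqp.ne (hinf.symm.trans (inf_eq_left.2 (hφb' ▸ (hσ p).1 ▸ OrderHomClass.mono φ h)))
  have hσpp' : σ p ≤ σ p' := monotone_of_isLeast_preimage_s9 hσ (hsup ▸ le_sup_left)
  have hjoin : σ p ⊔ b' = σ p' :=
    (hb'cov.eq_or_eq le_sup_right (sup_le hσpp' hb'cov.le)).resolve_left
      fun h => hσp (h ▸ le_sup_left)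
  have hmeet : IsGreatest (liftSet φ σ p q) (σ p ⊓ b') :=
    isGreatest_liftSet_of_covBy hσ hqp.lt.not_ge
      (inf_covBy_of_covBy_sup_right (hjoin ▸ hb'cov)) (by rw [map_inf, (hσ p).1, hφb', hinf])
  exact ⟨hjoin, hmeet.unique hb⟩

theorem projectiveQuot_lift [Finite L] [IsLowerModularLattice L] [IsModularLattice L₀]
    (hσ : ∀ y, IsLeast {x | φ x = y} (σ y)) {r s : L₀} (hrs : s ⋖ r) {sb : L}
    (hsb : IsGreatest (liftSet φ σ r s) sb) {x : L₀ × L₀} (hx : ProjectiveQuot (r, s) x) :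
    ∀ b, IsGreatest (liftSet φ σ x.1 x.2) b → ProjectiveQuot (σ r, sb) (σ x.1, b) := by
  induction hx with
  | refl => exact fun b hb => hb.unique hsb ▸ Relation.ReflTransGen.refl
  | @tail y z hy hstep ih =>
    intro b hb
    have hycov : y.2 ⋖ y.1 := ProjectiveQuot.covBy hy hrs
    have hzcov : z.2 ⋖ z.1 := ProjectiveQuot.covBy (hy.tail hstep) hrs
    obtain ⟨c, hc⟩ := exists_isGreatest_liftSet hσ hycov.le
    refine (ih c hc).tail ?_
    rcases hstep with h | h
    · exact Or.inl (transposedUp_lift hσ hycov hzcov h hc hb)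
    · exact Or.inr (transposedUp_lift hσ hzcov hycov h hb hc)

end Lift

theorem stmt_9_general {L L₀ : Type*} [Lattice L] [Fintype L] [IsModularLattice L]
    [Lattice L₀] [IsModularLattice L₀]
    (φ : LatticeHom L L₀)
    (σ : L₀ → L) (hσ : ∀ y : L₀, IsLeast {x : L | φ x = y} (σ y))
    (v : L) (hv : v = σ (φ v))
    (w : L) (hw : w ⋖ v)
    (r s : L₀) (hrs : s ⋖ r)
    (hproj : ProjectiveQuot (r, s) (φ v, φ w))
    (sb : L) (hsb : IsLUB {u : L | u ≤ σ r ∧ φ u ≤ s} sb) :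
    sb ⋖ σ r ∧ ProjectiveQuot (σ r, sb) (v, w) := by
  have hsb' : IsGreatest (liftSet φ σ r s) sb := by
    obtain ⟨b, hb⟩ := exists_isGreatest_liftSet hσ hrs.le
    rwa [hb.isLUB.unique hsb] at hb
  have hvw : ¬φ v ≤ φ w := fun h => hw.lt.not_ge <|
    calc v = σ (φ v) := hv
      _ ≤ σ (φ w) := monotone_of_isLeast_preimage_s9 hσ h
      _ ≤ w := (hσ _).2 rfl
  have hw' : IsGreatest (liftSet φ σ (φ v) (φ w)) w :=
    isGreatest_liftSet_of_covBy hσ hvw (by rwa [← hv]) le_rfl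
  refine ⟨covBy_of_isGreatest_liftSet hσ hrs hsb', ?_⟩
  simpa only [← hv] using projectiveQuot_lift hσ hrs hsb' hproj w hw'

/-- Let `φ : L → L₀` be an epimorphism of finite modular lattices with
smallest-preimage map `σ`, and `v = σ(φ v)`, `v ≠ 0`. Given a prime quotient `v/w`
and a prime quotient `r/s` of `L₀` projective to `φv/φw`, setting `r̲ = σ r` and
`s̲ = ⋁{u : u ≤ r̲, φ u ≤ s}`, the quotient `r̲/s̲` is prime and projective to `v/w`. -/
theorem stmt_9 {L L₀ : Type*} [Lattice L] [Fintype L] [OrderBot L] [IsModularLattice L]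
    [Lattice L₀] [Fintype L₀] [IsModularLattice L₀]
    (φ : LatticeHom L L₀) (hφ : Function.Surjective φ)
    (σ : L₀ → L) (hσ : ∀ y : L₀, IsLeast {x : L | φ x = y} (σ y))
    (v : L) (hv : v = σ (φ v)) (hv0 : v ≠ ⊥)
    (w : L) (hw : w ⋖ v)
    (r s : L₀) (hrs : s ⋖ r)
    (hproj : ProjectiveQuot (r, s) (φ v, φ w))
    (sb : L) (hsb : IsLUB {u : L | u ≤ σ r ∧ φ u ≤ s} sb) :
    sb ⋖ σ r ∧ ProjectiveQuot (σ r, sb) (v, w) :=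
  stmt_9_general φ σ hσ v hv w hw r s hrs hproj sb hsb
end

section
/- Let L be a finite modular lattice viewed as the closure system of sets J(x) ⊆ J(L), and let Λ be a base of lines of L. Then a subset X ⊆ J(L) is of the form J(x) for some x ∈ L if and only if X is an order ideal of the poset (J(L), ≤) and X is Λ-closed, i.e., for every line l ∈ Λ, if |X ∩ l| ≥ 2 then J(⋁l) ⊆ X. -/
/-!
Call `g` good when `J(g) ⊆ X`; by well-founded induction on `t` it suffices that the join
`t = a ⊔ b` of two good elements is good. Suppose a join-irreducible `r ≤ t` is not in `X`.
Shrinking `a` and `b` to a minimal pair `c ≤ a`, `d ≤ b` with `r ≤ c ⊔ d`, modularity makes `c`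
and `d` join-irreducible with `r ⊔ c = r ⊔ d = c ⊔ d = t`, so `{c, d, r}` extends to a line with
top `t`, and `Λ` contains a line `l` with the same top. By maximality of `l` some `p ∈ l` has
`p ⊔ c ≠ t`, and then `p ∈ X` because `c ⊔ p = c ⊔ (d ⊓ (c ⊔ p))` is a join of good elements
strictly below `t`; likewise some `p' ∈ l` has `p' ⊔ d ≠ t` and `p' ∈ X`. Modularity forbids
`p = p'`: for another point `q` of `l`, `p ⊔ q = t` forces `p ⊔ c = t` or `p ⊔ d = t`. So `l`
meets `X` twice, and `Λ`-closedness puts `r` in `X`.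
-/

/-- A line of a finite lattice with bottom: a set `l` of join-irreducibles with
`|l| ≥ 3`, maximal with respect to the property that `p ⊔ q = ⋁l` for all
distinct `p, q ∈ l`. -/
def IsLine {β : Type*} [Lattice β] [OrderBot β] (l : Finset β) : Prop :=
  (∀ p ∈ l, SupIrred p) ∧ 3 ≤ l.card ∧
  (∀ p ∈ l, ∀ q ∈ l, p ≠ q → p ⊔ q = l.sup id) ∧
  ∀ l' : Finset β, l ⊆ l' → (∀ p ∈ l', SupIrred p) →
    (∀ p ∈ l', ∀ q ∈ l', p ≠ q → p ⊔ q = l'.sup id) → l' = l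

section

variable {L : Type*} [Lattice L]

/-- `J(x)` in the paper's notation. -/
def supIrredBelow (x : L) : Set L := {p | SupIrred p ∧ p ≤ x}

theorem supIrredBelow_mono : Monotone (supIrredBelow (L := L)) :=
  fun _ _ hxy _ hp => ⟨hp.1, hp.2.trans hxy⟩

theorem supIrredBelow_bot [OrderBot L] : supIrredBelow (⊥ : L) = ∅ :=
  Set.eq_empty_of_forall_notMem fun _ hp => hp.1.ne_bot (le_bot_iff.mp hp.2)

def IsMinimalCover (r c d : L) : Prop :=
  r ≤ c ⊔ d ∧ ∀ c' ≤ c, ∀ d' ≤ d, r ≤ c' ⊔ d' → c' = c ∧ d' = d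

theorem IsMinimalCover.symm {r c d : L} (h : IsMinimalCover r c d) : IsMinimalCover r d c :=
  ⟨sup_comm c d ▸ h.1, fun d' hd' c' hc' hr => (h.2 c' hc' d' hd' (sup_comm d' c' ▸ hr)).symm⟩

theorem exists_isMinimalCover [Finite L] {r a b : L} (h : r ≤ a ⊔ b) :
    ∃ c ≤ a, ∃ d ≤ b, IsMinimalCover r c d := by
  obtain ⟨⟨c, d⟩, ⟨hca, hdb⟩, hmin⟩ :=
    exists_minimal_le_of_wellFoundedLT (fun p : L × L => r ≤ p.1 ⊔ p.2) (a, b) h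
  refine ⟨c, hca, d, hdb, hmin.1, fun c' hc' d' hd' hr => ?_⟩
  exact Prod.ext_iff.mp (hmin.eq_of_le hr (Prod.mk_le_mk.mpr ⟨hc', hd'⟩))

section Modular

variable [IsModularLattice L]

theorem SupIrred.le_or_le_of_le_sup {r d x y : L} (hr : SupIrred r) (hdx : d ≤ x)
    (hdy : d ≤ y) (hx : x ≤ d ⊔ r) (hy : y ≤ d ⊔ r) (h : r ≤ x ⊔ y) : r ≤ x ∨ r ≤ y := by
  have hx' : x ≤ d ⊔ r ⊓ x := by rw [← sup_inf_assoc_of_le r hdx, inf_eq_right.mpr hx]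
  have hy' : y ≤ d ⊔ r ⊓ y := by rw [← sup_inf_assoc_of_le r hdy, inf_eq_right.mpr hy]
  have hsplit : r ⊓ x ⊔ r ⊓ y ⊔ d ⊓ r = r := by
    rw [← sup_inf_assoc_of_le d (sup_le inf_le_left inf_le_left), inf_eq_right]
    refine h.trans (sup_le (hx'.trans ?_) (hy'.trans ?_)) <;>
      exact sup_le le_sup_right (by simp only [le_sup_left, le_sup_right, le_sup_of_le_left])
  rcases hr.2 hsplit with hxy | hd
  · exact (hr.2 hxy).imp inf_eq_left.mp inf_eq_left.mp
  · exact Or.inl ((inf_eq_right.mp hd).trans hdx)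

theorem SupIrred.sup_eq_or_sup_eq {p q a b : L} (hq : SupIrred q) (h : p ⊔ a ⊔ b = p ⊔ q) :
    p ⊔ a = p ⊔ q ∨ p ⊔ b = p ⊔ q := by
  have ha : a ≤ p ⊔ q := h ▸ le_sup_of_le_left le_sup_right
  have hb : b ≤ p ⊔ q := h ▸ le_sup_right
  have hq' : q ≤ (p ⊔ a) ⊔ (p ⊔ b) := by
    rw [sup_sup_sup_comm, sup_idem, ← sup_assoc, h]
    exact le_sup_right
  refine (hq.le_or_le_of_le_sup le_sup_left le_sup_left (sup_le le_sup_left ha)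
    (sup_le le_sup_left hb) hq').imp ?_ ?_ <;>
  exact fun hq'' => le_antisymm (sup_le le_sup_left ‹_›) (sup_le le_sup_left hq'')

theorem IsMinimalCover.right_le_sup {r c d : L} (h : IsMinimalCover r c d) : d ≤ c ⊔ r := by
  have hr : r ≤ c ⊔ d ⊓ (c ⊔ r) := by
    rw [← sup_inf_assoc_of_le d le_sup_left]
    exact le_inf h.1 le_sup_right
  rw [← (h.2 c le_rfl _ inf_le_left hr).2]
  exact inf_le_right

theorem IsMinimalCover.sup_left_eq {r c d : L} (h : IsMinimalCover r c d) : r ⊔ c = c ⊔ d :=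
  le_antisymm (sup_le h.1 le_sup_left)
    (sup_le le_sup_right (h.right_le_sup.trans_eq (sup_comm c r)))

theorem IsMinimalCover.sup_right_eq {r c d : L} (h : IsMinimalCover r c d) : r ⊔ d = c ⊔ d :=
  h.symm.sup_left_eq.trans (sup_comm d c)

theorem IsMinimalCover.supIrred_left {r c d : L} (hr : SupIrred r) (h : IsMinimalCover r c d)
    (hrd : ¬ r ≤ d) : SupIrred c := by
  refine ⟨fun hc => hrd ?_, fun u v huv => ?_⟩
  · have hcd : c ≤ d := inf_eq_left.mp (hc.eq_of_le inf_le_left)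
    exact h.1.trans (sup_le hcd le_rfl)
  · have hu : u ≤ c := huv ▸ le_sup_left
    have hv : v ≤ c := huv ▸ le_sup_right
    have hduv : d ⊔ u ⊔ v = d ⊔ r := by
      rw [sup_assoc, huv, sup_comm d c, ← h.sup_right_eq, sup_comm]
    rcases hr.sup_eq_or_sup_eq hduv with hdu | hdv
    · exact Or.inl (h.2 u hu d le_rfl (by rw [sup_comm, hdu]; exact le_sup_right)).1
    · exact Or.inr (h.2 v hv d le_rfl (by rw [sup_comm, hdv]; exact le_sup_right)).1

theorem SupIrred.exists_collinear_of_le_sup [Finite L] {r a b : L} (hr : SupIrred r)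
    (h : r ≤ a ⊔ b) (ha : ¬ r ≤ a) (hb : ¬ r ≤ b) :
    ∃ c ≤ a, ∃ d ≤ b, SupIrred c ∧ SupIrred d ∧ r ⊔ c = c ⊔ d ∧ r ⊔ d = c ⊔ d := by
  obtain ⟨c, hca, d, hdb, hcd⟩ := exists_isMinimalCover h
  exact ⟨c, hca, d, hdb, hcd.supIrred_left hr fun h => hb (h.trans hdb),
    hcd.symm.supIrred_left hr fun h => ha (h.trans hca), hcd.sup_left_eq, hcd.sup_right_eq⟩

end Modular

def SupClosedBelow (X : Set L) (t : L) : Prop :=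
  ∀ a b, supIrredBelow a ⊆ X → supIrredBelow b ⊆ X → a ⊔ b < t → supIrredBelow (a ⊔ b) ⊆ X

theorem SupClosedBelow.mem_of_sup_ne [IsModularLattice L] {X : Set L} {t c d q : L}
    (hX : SupClosedBelow X t) (hc : supIrredBelow c ⊆ X) (hd : supIrredBelow d ⊆ X)
    (hcd : c ⊔ d = t) (hq : SupIrred q) (hqt : q ≤ t) (hne : c ⊔ q ≠ t) : q ∈ X := by
  have hcq : c ⊔ d ⊓ (c ⊔ q) = c ⊔ q := by
    rw [← sup_inf_assoc_of_le d le_sup_left, hcd, inf_eq_right]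
    exact sup_le (hcd ▸ le_sup_left) hqt
  have hlt : c ⊔ q < t := lt_of_le_of_ne (sup_le (hcd ▸ le_sup_left) hqt) hne
  have hgood := hX c _ hc ((supIrredBelow_mono inf_le_left).trans hd) (hcq ▸ hlt)
  rw [hcq] at hgood
  exact hgood ⟨hq, le_sup_right⟩

section Lines

variable [OrderBot L]

def IsLineClosed (Λ : Set (Finset L)) (X : Set L) : Prop :=
  ∀ l ∈ Λ, ∀ p ∈ l, ∀ q ∈ l, p ≠ q → p ∈ X → q ∈ X → ∀ r, SupIrred r → r ≤ l.sup id → r ∈ X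

theorem IsLine.exists_sup_ne {l : Finset L} {e : L} (hl : IsLine l) (he : SupIrred e)
    (het : e ≠ l.sup id) : ∃ p ∈ l, p ⊔ e ≠ l.sup id := by
  classical
  obtain ⟨hirr, hcard, hpair, hmax⟩ := hl
  by_contra! h
  obtain ⟨p₀, hp₀⟩ : l.Nonempty := Finset.card_pos.mp (by omega)
  have hsup : (insert e l).sup id = l.sup id := by
    rw [Finset.sup_insert, id, sup_eq_right, ← h p₀ hp₀]
    exact le_sup_right
  have hel : e ∈ l := by
    refine Finset.insert_eq_self.mp (hmax _ (Finset.subset_insert e l) ?_ ?_)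
    · exact Finset.forall_mem_insert _ _ _ |>.mpr ⟨he, hirr⟩
    · rw [hsup]
      rintro x hx y hy hxy
      rw [Finset.mem_insert] at hx hy
      rcases hx with rfl | hx <;> rcases hy with rfl | hy
      · exact absurd rfl hxy
      · rw [sup_comm]; exact h y hy
      · exact h x hx
      · exact hpair x hx y hy hxy
  exact het (by simpa using h e hel)

theorem exists_isLine_of_sup_eq [Fintype L] {p q r t : L} (hp : SupIrred p) (hq : SupIrred q)
    (hr : SupIrred r) (hpq : p ≠ q) (hpr : p ≠ r) (hqr : q ≠ r)
    (hpqt : p ⊔ q = t) (hprt : p ⊔ r = t) (hqrt : q ⊔ r = t) :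
    ∃ l, IsLine l ∧ l.sup id = t := by
  classical
  set s : Finset L := {p, q, r}
  have hst : s.sup id = t := by
    simp only [s, Finset.sup_insert, Finset.sup_singleton, id, ← sup_assoc, hpqt]
    rw [sup_eq_left, ← hprt]
    exact le_sup_right
  set cand := Finset.univ.filter fun l' : Finset L => s ⊆ l' ∧ (∀ x ∈ l', SupIrred x) ∧
    ∀ x ∈ l', ∀ y ∈ l', x ≠ y → x ⊔ y = l'.sup id
  have hs : s ∈ cand := by
    refine Finset.mem_filter.mpr ⟨Finset.mem_univ _, subset_rfl, ?_, ?_⟩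
    · simp [s, hp, hq, hr]
    · simp only [s, hst, Finset.mem_insert, Finset.mem_singleton]
      rintro x (rfl | rfl | rfl) y (rfl | rfl | rfl) hxy <;> simp_all [sup_comm]
  obtain ⟨l, hl, hmax⟩ := Finset.exists_max_image cand Finset.card ⟨s, hs⟩
  obtain ⟨-, hsl, hirr, hpair⟩ := Finset.mem_filter.mp hl
  refine ⟨l, ⟨hirr, ?_, hpair, fun l' hll' hirr' hpair' => ?_⟩, ?_⟩
  · exact (Finset.card_le_card hsl).trans' (by simp [s, hpq, hpr, hqr])
  · exact (Finset.eq_of_subset_of_card_le hll'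
      (hmax l' (Finset.mem_filter.mpr ⟨Finset.mem_univ _, hsl.trans hll', hirr', hpair'⟩))).symm
  · rw [← hpair p (hsl (by simp [s])) q (hsl (by simp [s])) hpq, hpqt]

variable [IsModularLattice L]

theorem IsLine.exists_two_mem {X : Set L} {t c d : L} {l : Finset L} (hl : IsLine l)
    (hlt : l.sup id = t) (hX : SupClosedBelow X t) (hcX : supIrredBelow c ⊆ X)
    (hdX : supIrredBelow d ⊆ X) (hc : SupIrred c) (hd : SupIrred d) (hcd : c ⊔ d = t)
    (hct : c ≠ t) (hdt : d ≠ t) : ∃ p ∈ l, ∃ q ∈ l, p ≠ q ∧ p ∈ X ∧ q ∈ X := by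
  have hle : ∀ p ∈ l, p ≤ t := fun p hp => hlt ▸ Finset.le_sup (f := id) hp
  obtain ⟨p, hp, hpc⟩ := hl.exists_sup_ne hc (hlt ▸ hct)
  obtain ⟨p', hp', hpd⟩ := hl.exists_sup_ne hd (hlt ▸ hdt)
  rw [hlt, sup_comm] at hpc hpd
  refine ⟨p, hp, p', hp', ?_, hX.mem_of_sup_ne hcX hdX hcd (hl.1 p hp) (hle p hp) hpc,
    hX.mem_of_sup_ne hdX hcX (sup_comm d c ▸ hcd) (hl.1 p' hp') (hle p' hp') hpd⟩
  rintro rfl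
  obtain ⟨q, hq, hqp⟩ := Finset.exists_mem_ne (s := l) (by have := hl.2.1; omega) p
  have hpq : p ⊔ q = t := hlt ▸ hl.2.2.1 p hp q hq hqp.symm
  have hpcd : p ⊔ c ⊔ d = p ⊔ q := by rw [sup_assoc, hcd, hpq, sup_eq_right.mpr (hle p hp)]
  rcases (hl.1 q hq).sup_eq_or_sup_eq hpcd with h | h
  · exact hpc (by rw [sup_comm, h, hpq])
  · exact hpd (by rw [sup_comm, h, hpq])

theorem supIrredBelow_sup_subset [Fintype L] {Λ : Set (Finset L)} {X : Set L}
    (hΛ : ∀ l ∈ Λ, IsLine l) (hbase : ∀ l' : Finset L, IsLine l' → ∃ l ∈ Λ, l.sup id = l'.sup id)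
    (hclosed : IsLineClosed Λ X) {a b : L} (ha : supIrredBelow a ⊆ X)
    (hb : supIrredBelow b ⊆ X) : supIrredBelow (a ⊔ b) ⊆ X := by
  induction hab : a ⊔ b using WellFoundedLT.induction generalizing a b with | _ t IH => ?_
  rintro r ⟨hr, hrt⟩
  by_contra hrX
  have hX : SupClosedBelow X t := fun a' b' ha' hb' hlt => IH _ hlt ha' hb' rfl
  have hra : ¬ r ≤ a := fun h => hrX (ha ⟨hr, h⟩)
  have hrb : ¬ r ≤ b := fun h => hrX (hb ⟨hr, h⟩)
  obtain ⟨c, hca, d, hdb, hc, hd, hrc, hrd⟩ := hr.exists_collinear_of_le_sup (hab ▸ hrt) hra hrb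
  have hcX := (supIrredBelow_mono hca).trans ha
  have hdX := (supIrredBelow_mono hdb).trans hb
  have hcd : c ⊔ d = t := by
    by_contra hne
    refine hrX (hX c d hcX hdX ?_ ⟨hr, hrc ▸ le_sup_left⟩)
    exact lt_of_le_of_ne (hab ▸ sup_le_sup hca hdb) hne
  have hct : c ≠ t := fun h => hra (hrt.trans (h ▸ hca))
  have hdt : d ≠ t := fun h => hrb (hrt.trans (h ▸ hdb))
  have hrc' : r ≠ c := fun h => hrX (hcX ⟨hr, h.le⟩)
  have hrd' : r ≠ d := fun h => hrX (hdX ⟨hr, h.le⟩)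
  have hcd' : c ≠ d := fun h => hct (by rw [← hcd, h, sup_idem])
  obtain ⟨l', hl', hl't⟩ := exists_isLine_of_sup_eq hc hd hr hcd' hrc'.symm hrd'.symm hcd
    (by rw [sup_comm, hrc, hcd]) (by rw [sup_comm, hrd, hcd])
  obtain ⟨l, hlΛ, hlt⟩ := hbase l' hl'
  rw [hl't] at hlt
  obtain ⟨p, hp, q, hq, hpq, hpX, hqX⟩ :=
    (hΛ l hlΛ).exists_two_mem hlt hX hcX hdX hc hd hcd hct hdt
  exact hrX (hclosed l hlΛ p hp q hq hpq hpX hqX r hr (hlt ▸ hrt))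

end Lines

end

/-- Let `L` be a finite modular lattice and `Λ` a base of lines of `L`
(a set of lines containing, for each line top, exactly one line with that join).
Then `X ⊆ J(L)` is of the form `J(x)` iff `X` is an order ideal of `(J(L), ≤)` and
`X` is `Λ`-closed: for each `l ∈ Λ`, if `X` contains two distinct points of `l`
then `J(⋁l) ⊆ X`. -/
theorem stmt_17 {L : Type*} [Lattice L] [OrderBot L] [Fintype L] [IsModularLattice L]
    (Λ : Set (Finset L)) (hΛ : ∀ l ∈ Λ, IsLine l)
    (hbase : ∀ l' : Finset L, IsLine l' → ∃! l, l ∈ Λ ∧ l.sup id = l'.sup id)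
    (X : Set L) (hX : X ⊆ {p | SupIrred p}) :
    (∃ x : L, X = {p | SupIrred p ∧ p ≤ x}) ↔
      ((∀ p ∈ X, ∀ q : L, SupIrred q → q ≤ p → q ∈ X) ∧
       (∀ l ∈ Λ, ∀ p ∈ l, ∀ q ∈ l, p ≠ q → p ∈ X → q ∈ X →
         ∀ r : L, SupIrred r → r ≤ l.sup id → r ∈ X)) := by
  constructor
  · rintro ⟨x, rfl⟩
    refine ⟨fun p hp q hq hqp => ⟨hq, hqp.trans hp.2⟩, ?_⟩
    intro l hl p hp q hq hpq hpX hqX r hr hrl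
    exact ⟨hr, hrl.trans ((hΛ l hl).2.2.1 p hp q hq hpq ▸ sup_le hpX.2 hqX.2)⟩
  · rintro ⟨hideal, hclosed⟩
    refine ⟨(Set.toFinite X).toFinset.sup id,
      subset_antisymm (fun p hp => ⟨hX hp, Finset.le_sup (f := id) (by simpa using hp)⟩) ?_⟩
    refine Finset.sup_induction (p := fun x => supIrredBelow x ⊆ X) (by simp [supIrredBelow_bot])
      (fun a ha b hb => supIrredBelow_sup_subset hΛ (fun l' hl' => (hbase l' hl').exists) hclosed
        ha hb) ?_
    exact fun s hs q hq => hideal s (by simpa using hs) q hq.1 hq.2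
end

section
/- Let V be a finitely generated variety of lattices with subdirectly irreducible members S₁,…,S_r (all finite), and let (P,≤) be a finite poset. Then the lattice F_V(P,≤) freely generated by (P,≤) in V is finite, and it embeds as a subdirect product of lattices L₁,…,L_t where each L_j is the image of F_V(P,≤) under the homomorphism induced by a P-labelling of some S_k, with exactly one factor for each equivalence class (under automorphisms of S_k) of P-labellings. -/
/-!
The `P`-labellings of the finitely many finite lattices `S k` fall into finitely many classes
under automorphisms; pick one labelling per class and let `h j` be the induced homomorphisms.
Each `h j` is onto because its labelling generates. They separate points because, writing `F` as
a subdirect product of copies of the `S k`, every coordinate projection restricted to `P` is itself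
a labelling, equivalent to a chosen one; as homomorphisms agreeing on generators are equal, that
coordinate is the corresponding `h j` followed by an automorphism. In particular `F` embeds in a
finite product and is finite.
-/

open Function Set

section Generation

variable {L M : Type*} [Lattice L] [Lattice M]

def GeneratesLattice (s : Set L) : Prop :=
  ∀ T : Sublattice L, s ⊆ T → ∀ x, x ∈ T

def LatticeHom.eqLocus (f g : LatticeHom L M) : Sublattice L where
  carrier := {x | f x = g x}
  supClosed' x (hx : f x = g x) y (hy : f y = g y) := show f (x ⊔ y) = g (x ⊔ y) by
    rw [map_sup, map_sup, hx, hy]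
  infClosed' x (hx : f x = g x) y (hy : f y = g y) := show f (x ⊓ y) = g (x ⊓ y) by
    rw [map_inf, map_inf, hx, hy]

theorem LatticeHom.eq_of_eqOn_of_generatesLattice {s : Set L} (hs : GeneratesLattice s)
    {f g : LatticeHom L M} (hfg : EqOn f g s) : f = g :=
  LatticeHom.ext fun x => hs (f.eqLocus g) hfg x

theorem GeneratesLattice.range_comp {α : Type*} {η : α → L} (hη : GeneratesLattice (range η))
    {f : LatticeHom L M} (hf : Surjective f) : GeneratesLattice (range (f ∘ η)) := by
  intro T hT y
  obtain ⟨x, rfl⟩ := hf y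
  exact hη (T.comap f) (fun _ ⟨a, ha⟩ => ha ▸ hT ⟨a, rfl⟩) x

theorem LatticeHom.surjective_of_generatesLattice_range_comp {α : Type*} {η : α → L}
    {f : LatticeHom L M} (hfη : GeneratesLattice (range (f ∘ η))) : Surjective f := by
  intro y
  obtain ⟨x, -, hx⟩ := hfη ((⊤ : Sublattice L).map f) (fun _ ⟨a, ha⟩ => ⟨η a, trivial, ha⟩) y
  exact ⟨x, hx⟩

end Generation

section Labelling

variable {ι : Type*} (S : ι → Type*) [∀ k, Lattice (S k)] (P : Type*) [Preorder P]

def Labelling : Type _ :=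
  {a : Σ k, P →o S k // GeneratesLattice (range a.2)}

variable {S P}

def Labelling.IsEquivalent (a b : Labelling S P) : Prop :=
  ∃ hk : a.1.1 = b.1.1, ∃ α : S b.1.1 ≃o S b.1.1, ∀ p, α (hk ▸ a.1.2 p) = b.1.2 p

instance Labelling.setoid : Setoid (Labelling S P) where
  r := Labelling.IsEquivalent
  iseqv := by
    refine ⟨fun a => ⟨rfl, OrderIso.refl _, fun _ => rfl⟩, ?_, ?_⟩
    · rintro ⟨⟨k, g⟩, _⟩ ⟨⟨k', g'⟩, _⟩ ⟨hk : k = k', α, hα⟩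
      subst hk
      exact ⟨rfl, α.symm, fun p => α.symm_apply_eq.mpr (hα p).symm⟩
    · rintro ⟨⟨k, g⟩, _⟩ ⟨⟨k', g'⟩, _⟩ ⟨⟨k'', g''⟩, _⟩ ⟨hk : k = k', α, hα⟩
        ⟨hk' : k' = k'', β, hβ⟩
      subst hk hk'
      exact ⟨rfl, α.trans β, fun p => (congrArg β (hα p)).trans (hβ p)⟩

instance Labelling.finite [Finite ι] [∀ k, Finite (S k)] [Finite P] : Finite (Labelling S P) :=
  have (k : ι) : Finite (P →o S k) := FunLike.finite _
  Subtype.finite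

/-- `g` is `f` followed by the automorphism relating the two labellings. -/
theorem Labelling.IsEquivalent.apply_eq_apply {F : Type*} [Lattice F] {η : P →o F}
    (hη : GeneratesLattice (range η)) {a b : Labelling S P} (hab : a ≈ b)
    {f : LatticeHom F (S a.1.1)} (hf : ∀ p, f (η p) = a.1.2 p)
    {g : LatticeHom F (S b.1.1)} (hg : ∀ p, g (η p) = b.1.2 p) {x y : F}
    (hxy : f x = f y) : g x = g y := by
  rcases a with ⟨⟨k, a⟩, _⟩
  rcases b with ⟨⟨k', b⟩, _⟩
  obtain ⟨hk : k = k', α, hα⟩ := hab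
  subst hk
  have hgf : g = (α : LatticeHom (S k) (S k)).comp f :=
    LatticeHom.eq_of_eqOn_of_generatesLattice hη <| by
      rintro _ ⟨p, rfl⟩
      simp only [LatticeHom.comp_apply, hf, hg]
      exact (hα p).symm
  rw [hgf, LatticeHom.comp_apply, LatticeHom.comp_apply, hxy]

/-- Each coordinate `c i ∘ η` of the subdirect decomposition is itself a labelling, equivalent to
some `lab j`. -/
theorem Labelling.separates_of_forall_isEquivalent {F : Type*} [Lattice F] {η : P →o F}
    (hη : GeneratesLattice (range η)) {I : Type*} {f : I → ι} (c : ∀ i, LatticeHom F (S (f i)))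
    (hc : ∀ i, Surjective (c i)) (hcsep : ∀ x y, (∀ i, c i x = c i y) → x = y)
    {J : Type*} (lab : J → Labelling S P) (h : ∀ j, LatticeHom F (S (lab j).1.1))
    (hh : ∀ j p, h j (η p) = (lab j).1.2 p) (hcover : ∀ a : Labelling S P, ∃ j, lab j ≈ a)
    {x y : F} (hxy : ∀ j, h j x = h j y) : x = y := by
  refine hcsep x y fun i => ?_
  let a : Labelling S P := ⟨⟨f i, (c i : F →o S (f i)).comp η⟩, hη.range_comp (hc i)⟩
  obtain ⟨j, hj⟩ := hcover a
  exact Labelling.IsEquivalent.apply_eq_apply hη hj (hh j) (g := c i) (fun _ => rfl) (hxy j)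

end Labelling

theorem Quotient.existsUnique_out_equiv {α β : Type*} {s : Setoid α} (e : β ≃ Quotient s)
    (a : α) : ∃! j, (e j).out ≈ a := by
  simpa only [Quotient.eq_mk_iff_out] using e.bijective.existsUnique ⟦a⟧

/-- Let `V` be a finitely generated variety of lattices whose
subdirectly irreducible members are (up to isomorphism) the finite lattices
`S 0, …, S (r-1)`, so that every member of `V` is a subdirect product of copies
of the `S k` (hypothesis `hfg`).  Let `(P, ≤)` be a finite poset and `F` the
lattice freely generated by `P` within `V`: `F ∈ V`, `η : P → F` is monotone,
its range generates `F`, and every monotone map from `P` to a member of `V`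
extends uniquely to a lattice homomorphism (hypothesis `huniv`).  Then `F` is
finite, and `F` embeds as a subdirect product of lattices `S (k 1), …, S (k t)`,
the `j`-th factor being the image of `F` under the homomorphism `h j` induced by
a `P`-labelling `lab j` of `S (k j)` (a monotone map whose range generates),
with exactly one factor for each equivalence class (under automorphisms) of
`P`-labellings. -/
theorem stmt_18
    (r : ℕ) (S : Fin r → Type) [∀ k, Lattice (S k)] [∀ k, Fintype (S k)]
    (V : (T : Type) → [inst : Lattice T] → Prop)
    (hVS : ∀ k, V (S k))
    (hfg : ∀ (T : Type) [Lattice T], V T →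
      ∃ (ι : Type) (f : ι → Fin r) (e : T → ∀ i, S (f i)),
        (∀ x y : T, e (x ⊔ y) = e x ⊔ e y) ∧ (∀ x y : T, e (x ⊓ y) = e x ⊓ e y) ∧
        Function.Injective e ∧ ∀ i, Function.Surjective fun x => e x i)
    (P : Type) [PartialOrder P] [Fintype P]
    (F : Type) [Lattice F] (hFV : V F)
    (η : P →o F)
    (hgen : ∀ S' : Sublattice F, Set.range ⇑η ⊆ ↑S' → ∀ x : F, x ∈ S')
    (huniv : ∀ (T : Type) [Lattice T], V T → ∀ g : P →o T,
      ∃! h : LatticeHom F T, ∀ p, h (η p) = g p) :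
    Finite F ∧
    ∃ (t : ℕ) (k : Fin t → Fin r) (lab : ∀ j, P →o S (k j))
      (h : ∀ j, LatticeHom F (S (k j))),
      (∀ j p, h j (η p) = lab j p) ∧
      (∀ j (S' : Sublattice (S (k j))), Set.range ⇑(lab j) ⊆ ↑S' → ∀ x, x ∈ S') ∧
      (∀ j, Function.Surjective (h j)) ∧
      (∀ x y : F, (∀ j, h j x = h j y) → x = y) ∧
      (∀ (k' : Fin r) (lab' : P →o S k'),
        (∀ S' : Sublattice (S k'), Set.range ⇑lab' ⊆ ↑S' → ∀ x, x ∈ S') →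
        ∃! j : Fin t, ∃ hk : k j = k', ∃ α : S k' ≃o S k',
          ∀ p, α (hk ▸ lab j p) = lab' p) := by
  obtain ⟨ι, f, e, hesup, heinf, heinj, hesurj⟩ := hfg F hFV
  let eHom : LatticeHom F (∀ i, S (f i)) := ⟨⟨e, hesup⟩, heinf⟩
  let enum := (Finite.equivFin (Quotient (Labelling.setoid : Setoid (Labelling S P)))).symm
  let rep : Fin _ → Labelling S P := fun j => (enum j).out
  choose h hh using fun j => (huniv _ (hVS (rep j).1.1) (rep j).1.2).exists
  have hsep : ∀ x y, (∀ j, h j x = h j y) → x = y := fun x y =>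
    Labelling.separates_of_forall_isEquivalent (S := S) hgen (f := f)
      (fun i => (Pi.evalLatticeHom i).comp eHom) hesurj (fun x y hxy => heinj (funext hxy)) rep h hh
      (fun a => ⟨enum.symm (Quotient.mk _ a), Quotient.eq_mk_iff_out.mp (enum.apply_symm_apply _)⟩)
  refine ⟨Finite.of_injective (fun x j => h j x) fun x y hxy => hsep x y (congrFun hxy),
    _, fun j => (rep j).1.1, fun j => (rep j).1.2, h, hh, fun j => (rep j).2,
    fun j => LatticeHom.surjective_of_generatesLattice_range_comp (η := η) ?_, hsep,
    fun k' lab' hlab' => Quotient.existsUnique_out_equiv enum ⟨⟨k', lab'⟩, hlab'⟩⟩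
  simpa only [comp_def, hh j] using (rep j).2
end
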